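/- arXiv:1803.06843 — 6 statements merged into one kernel-verified Lean document; each statement's English description precedes it below -/
import Mathlib

section
/- Suppose b_k(t)/b_{k+1}(t) ≤ b_k(u)/b_{k+1}(u) for 0 ≤ k ≤ N−1, all b_j(t), b_j(u) > 0, and let Q_0,…,Q_N be the points produced by the geometric algorithm at parameter t (Q_k := (Σ_{j≤k} ω_j W_j b_j(t))/(Σ_{j≤k} ω_j b_j(t))). Then S_N(u) := (Σ_k ω_k W_k b_k(u))/(Σ_k ω_k b_k(u)) lies in the convex hull of {Q_0, …, Q_N}. -/
/-!
Put `c k = b k u / b k t`, which is nonincreasing by the ratio hypothesis. Then `S_N(u)` is the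
center of mass of the `W k` with weights `c k * (ω k * b k t)`, and Abel summation rewrites it as
the center of mass of the prefix centers `Q k` with weights
`(c k - c (k + 1)) * ∑_{j ≤ k} ω j * b j t` (where `c (N + 1) := 0`), which are nonnegative.
-/

open Finset

theorem Finset.sum_range_smul_eq_sum_range_sub_smul_partialSum {R M : Type*} [Ring R]
    [AddCommGroup M] [Module R M] (c : ℕ → R) (a : ℕ → M) (n : ℕ) (hc : c n = 0) :
    ∑ k ∈ range n, c k • a k = ∑ k ∈ range n, (c k - c (k + 1)) • ∑ j ∈ range (k + 1), a j := by
  have h := sum_range_by_parts c a (n + 1)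
  simp only [sum_range_succ _ n, hc, zero_smul, add_zero, add_tsub_cancel_right, zero_sub] at h
  rw [h, ← sum_neg_distrib]
  simp only [← neg_smul, neg_sub]

theorem Finset.sum_range_mul_smul_eq_sum_sub_mul_smul_prefix_centerMass {𝕜 E : Type*} [Field 𝕜]
    [AddCommGroup E] [Module 𝕜 E] (n : ℕ) (p c : ℕ → 𝕜) (z : ℕ → E)
    (hS : ∀ k < n, ∑ j ∈ range (k + 1), p j ≠ 0) (hc : c n = 0) :
    ∑ k ∈ range n, (c k * p k) • z k =
      ∑ k ∈ range n, ((c k - c (k + 1)) * ∑ j ∈ range (k + 1), p j) •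
        (range (k + 1)).centerMass p z := by
  calc ∑ k ∈ range n, (c k * p k) • z k
      = ∑ k ∈ range n, c k • p k • z k := sum_congr rfl fun k _ => mul_smul _ _ _
    _ = ∑ k ∈ range n, (c k - c (k + 1)) • ∑ j ∈ range (k + 1), p j • z j :=
        sum_range_smul_eq_sum_range_sub_smul_partialSum c _ n hc
    _ = _ := by
        refine sum_congr rfl fun k hk => ?_
        rw [mul_smul, centerMass, smul_inv_smul₀ (hS k (mem_range.mp hk))]

theorem Finset.centerMass_mem_convexHull_prefix_centerMass {𝕜 E : Type*} [Field 𝕜] [LinearOrder 𝕜]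
    [IsStrictOrderedRing 𝕜] [AddCommGroup E] [Module 𝕜 E] (n : ℕ) (p c : ℕ → 𝕜) (z : ℕ → E)
    (hp : ∀ k ≤ n, 0 < p k) (hc : ∀ k < n, c (k + 1) ≤ c k) (hcn : 0 < c n) :
    (range (n + 1)).centerMass (fun k => c k * p k) z ∈
      convexHull 𝕜 ((fun k => (range (k + 1)).centerMass p z) '' Set.Iic n) := by
  set c' := Function.update c (n + 1) 0
  have hc'_eq : ∀ k ∈ range (n + 1), c' k = c k := fun k hk =>
    Function.update_of_ne (by rw [mem_range] at hk; omega) _ _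
  have hc'_end : c' (n + 1) = 0 := Function.update_self _ _ _
  have hc'_anti : ∀ k ∈ range (n + 1), c' (k + 1) ≤ c' k := by
    intro k hk
    rw [hc'_eq k hk]
    rcases (mem_range_succ_iff.mp hk).lt_or_eq with hk | rfl
    · rw [hc'_eq (k + 1) (mem_range_succ_iff.mpr hk)]
      exact hc k hk
    · exact hc'_end ▸ hcn.le
  set S : ℕ → 𝕜 := fun k => ∑ j ∈ range (k + 1), p j
  have hS : ∀ k < n + 1, 0 < S k := fun k hk =>
    sum_pos (fun j hj => hp j (by rw [mem_range] at hj; omega)) nonempty_range_add_one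
  set μ : ℕ → 𝕜 := fun k => (c' k - c' (k + 1)) * S k
  have hμ : ∀ k ∈ range (n + 1), 0 ≤ μ k := fun k hk =>
    mul_nonneg (sub_nonneg.mpr (hc'_anti k hk)) (hS k (mem_range.mp hk)).le
  have hpos : 0 < ∑ k ∈ range (n + 1), μ k := by
    refine sum_pos' hμ ⟨n, self_mem_range_succ n, mul_pos ?_ (hS n n.lt_succ_self)⟩
    rwa [hc'_eq n (self_mem_range_succ n), hc'_end, sub_zero]
  have hsum : ∑ k ∈ range (n + 1), c' k * p k = ∑ k ∈ range (n + 1), μ k :=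
    sum_range_smul_eq_sum_range_sub_smul_partialSum c' p (n + 1) hc'_end
  have hcm : (range (n + 1)).centerMass (fun k => c k * p k) z =
      (range (n + 1)).centerMass μ fun k => (range (k + 1)).centerMass p z := by
    rw [← centerMass_congr_weights fun k hk => congrArg (· * p k) (hc'_eq k hk), centerMass,
      centerMass, hsum, sum_range_mul_smul_eq_sum_sub_mul_smul_prefix_centerMass (n + 1) p c' z
        (fun k hk => (hS k hk).ne') hc'_end]
  rw [hcm]
  exact centerMass_mem_convexHull _ hμ hpos fun k hk =>
    Set.mem_image_of_mem _ (Set.mem_Iic.mpr (mem_range_succ_iff.mp hk))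

theorem stmt7 (N d : ℕ) {α : Type*} (ω : ℕ → ℝ) (b : ℕ → α → ℝ) (t u : α)
    (W : ℕ → Fin d → ℝ)
    (hω : ∀ j ≤ N, 0 < ω j)
    (hbt : ∀ j ≤ N, 0 < b j t) (hbu : ∀ j ≤ N, 0 < b j u)
    (hratio : ∀ k < N, b k t / b (k + 1) t ≤ b k u / b (k + 1) u)
    (Q : ℕ → Fin d → ℝ)
    (hQ : ∀ k ≤ N, Q k = (∑ j ∈ range (k + 1), ω j * b j t)⁻¹ •
        ∑ j ∈ range (k + 1), (ω j * b j t) • W j) :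
    (∑ k ∈ range (N + 1), ω k * b k u)⁻¹ •
        ∑ k ∈ range (N + 1), (ω k * b k u) • W k ∈
      convexHull ℝ (Q '' Set.Iic N) := by
  have hc_anti : ∀ k < N, b (k + 1) u / b (k + 1) t ≤ b k u / b k t := by
    intro k hk
    have h := hratio k hk
    rw [div_le_div_iff₀ (hbt _ hk) (hbu _ hk)] at h
    rw [div_le_div_iff₀ (hbt _ hk) (hbt k hk.le)]
    linear_combination h
  have hweights : ∀ k ∈ range (N + 1), b k u / b k t * (ω k * b k t) = ω k * b k u := by
    intro k hk
    have := (hbt k (mem_range_succ_iff.mp hk)).ne'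
    field_simp
  have key := centerMass_mem_convexHull_prefix_centerMass N (fun k => ω k * b k t)
    (fun k => b k u / b k t) W (fun k hk => mul_pos (hω k hk) (hbt k hk)) hc_anti
    (div_pos (hbu N le_rfl) (hbt N le_rfl))
  rw [centerMass_congr_weights hweights] at key
  rwa [Set.image_congr (s := Set.Iic N)
    (g := fun k => (range (k + 1)).centerMass (fun j => ω j * b j t) W) hQ]
end

section
/- In the convex-hull representation of S_N(u) in terms of Q_0,…,Q_N, the coefficient identity holds: S_N(u) = D_N(u)^{-1} [ (ω_N/h_N) b_N(u) Q_N + Σ_{k=0}^{N-1} (ω_k/h_k) b_k(u) (1 − b_k(t) b_{k+1}(u)/(b_{k+1}(t) b_k(u))) Q_k ], where D_N(u) = Σ_{k=0}^N ω_k b_k(u). -/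
/-! Write `A k = ∑_{j ≤ k} ω j b j(t)`, so that `A k • Q k` is the partial sum
`∑_{j ≤ k} (ω j b j(t)) • W j` and `ω k / h k = A k / b k(t)`. Summation by parts with the
ratios `r k = b k(u) / b k(t)` turns `∑ (ω k b k(u)) • W k = ∑ (r k · ω k b k(t)) • W k` into
`r N • (A N • Q N) + ∑_{k < N} (r k - r (k+1)) • (A k • Q k)`, and these are the stated
coefficients. -/

open Finset

theorem sum_range_mul_smul_eq_by_parts {R M : Type*} [Ring R] [AddCommGroup M] [Module R M]
    (r a : ℕ → R) (W : ℕ → M) (N : ℕ) :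
    ∑ k ∈ range (N + 1), (r k * a k) • W k =
      r N • ∑ j ∈ range (N + 1), a j • W j +
        ∑ k ∈ range N, (r k - r (k + 1)) • ∑ j ∈ range (k + 1), a j • W j := by
  induction N with
  | zero => simp [smul_smul]
  | succ n ih =>
      simp only [sum_range_succ, smul_add, sub_smul, smul_smul, sub_mul, ih]
      abel

theorem div_eq_div_of_eq_mul_div {ω x A h : ℝ} (hω : ω ≠ 0) (hx : x ≠ 0) (hA : A ≠ 0)
    (hh : h = ω * x / A) : ω / h = A / x := by
  rw [hh]
  field_simp

theorem div_mul_mul_one_sub_div {A x x' y y' : ℝ} (hx : x ≠ 0) (hx' : x' ≠ 0) (hy : y ≠ 0) :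
    A / x * y * (1 - x * y' / (x' * y)) = (y / x - y' / x') * A := by
  field_simp

theorem stmt8 (N d : ℕ) {α : Type*} (ω : ℕ → ℝ) (b : ℕ → α → ℝ) (t u : α)
    (W : ℕ → Fin d → ℝ)
    (hω : ∀ j ≤ N, 0 < ω j)
    (hbt : ∀ j ≤ N, 0 < b j t) (hbu : ∀ j ≤ N, 0 < b j u)
    (h : ℕ → ℝ) (Q : ℕ → Fin d → ℝ)
    (hh : ∀ k ≤ N, h k = ω k * b k t / ∑ j ∈ range (k + 1), ω j * b j t)
    (hQ : ∀ k ≤ N, Q k = (∑ j ∈ range (k + 1), ω j * b j t)⁻¹ •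
        ∑ j ∈ range (k + 1), (ω j * b j t) • W j) :
    (∑ k ∈ range (N + 1), ω k * b k u)⁻¹ •
        ∑ k ∈ range (N + 1), (ω k * b k u) • W k =
      (∑ k ∈ range (N + 1), ω k * b k u)⁻¹ •
        ((ω N / h N * b N u) • Q N +
          ∑ k ∈ range N, (ω k / h k * b k u *
            (1 - b k t * b (k + 1) u / (b (k + 1) t * b k u))) • Q k) := by
  set A : ℕ → ℝ := fun k => ∑ j ∈ range (k + 1), ω j * b j t
  have hA : ∀ k ≤ N, A k ≠ 0 := fun k hk =>
    (sum_pos (fun j hj => mul_pos (hω j (by grind)) (hbt j (by grind))) nonempty_range_add_one).ne'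
  have hωh : ∀ k ≤ N, ω k / h k = A k / b k t := fun k hk =>
    div_eq_div_of_eq_mul_div (hω k hk).ne' (hbt k hk).ne' (hA k hk) (hh k hk)
  have hAQ : ∀ k ≤ N, A k • Q k = ∑ j ∈ range (k + 1), (ω j * b j t) • W j := fun k hk => by
    rw [hQ k hk, smul_inv_smul₀ (hA k hk)]
  have hratio : ∀ k ∈ range (N + 1), ω k * b k u = b k u / b k t * (ω k * b k t) := fun k hk => by
    field_simp [(hbt k (by grind)).ne']
  rw [sum_congr rfl fun k hk => congrArg (· • W k) (hratio k hk),
    sum_range_mul_smul_eq_by_parts (fun k => b k u / b k t)]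
  congr 2
  · rw [← hAQ N le_rfl, smul_smul, hωh N le_rfl, div_mul_comm]
  · refine sum_congr rfl fun k hk => ?_
    have hk : k < N := mem_range.mp hk
    rw [← hAQ k hk.le, smul_smul, hωh k hk.le,
      div_mul_mul_one_sub_div (hbt k hk.le).ne' (hbt (k + 1) hk).ne' (hbu k hk.le).ne']
end

section
/- For Bernstein polynomials B^n_k(t) = C(n,k) t^k (1−t)^{n−k} with 0 < t < 1, the quantities h_k := ω_k B^n_k(t)/Σ_{j≤k} ω_j B^n_j(t) satisfy the nonlinear recurrence h_k = ω_k h_{k-1} t (n−k+1) / (ω_{k-1} k (1−t) + ω_k h_{k-1} t (n−k+1)) for 1 ≤ k ≤ n, with h_0 = 1. -/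
/-! Consecutive Bernstein polynomials have ratio
`B^n_{k+1} / B^n_k = (n - k) t / ((k + 1) (1 - t))`. Combined with `S_k = S_{k-1} + ω_k B^n_k`
for the partial sums `S_k = Σ_{j ≤ k} ω_j B^n_j`, this turns `h_k = ω_k B^n_k / S_k` into a
Möbius function of `h_{k-1} = ω_{k-1} B^n_{k-1} / S_{k-1}`. -/

open Finset

/-- The Bernstein polynomial `B^n_k` evaluated at `t`. -/
def bern (n k : ℕ) (t : ℝ) : ℝ := (n.choose k : ℝ) * t ^ k * (1 - t) ^ (n - k)

lemma bern_pos {n k : ℕ} {t : ℝ} (ht : t ∈ Set.Ioo (0 : ℝ) 1) (hk : k ≤ n) :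
    0 < bern n k t := by
  have : 0 < (n.choose k : ℝ) := by exact_mod_cast Nat.choose_pos hk
  have : 0 < 1 - t := sub_pos.2 ht.2
  have := ht.1
  unfold bern
  positivity

/-- Both sides vanish when `n ≤ k`, thanks to truncated subtraction. -/
lemma succ_mul_one_sub_mul_bern_succ (n k : ℕ) (t : ℝ) :
    (k + 1 : ℝ) * (1 - t) * bern n (k + 1) t = ((n - k : ℕ) : ℝ) * t * bern n k t := by
  have hchoose : (n.choose (k + 1) : ℝ) * (k + 1) = n.choose k * ((n - k : ℕ) : ℝ) := by
    exact_mod_cast Nat.choose_succ_right_eq n k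
  rcases le_or_gt n k with hnk | hkn
  · simp [bern, Nat.choose_eq_zero_of_lt (Nat.lt_succ_of_le hnk), Nat.sub_eq_zero_of_le hnk]
  · unfold bern
    rw [show n - k = n - (k + 1) + 1 by omega] at hchoose ⊢
    linear_combination t * t ^ k * (1 - t) ^ (n - (k + 1)) * (1 - t) * hchoose

lemma div_add_eq_of_mul_eq {K : Type*} [Field K] {S a a' p q : K} (hS : S ≠ 0) (hq : q ≠ 0)
    (h : a' * q = a * p) :
    a' / (S + a') = p * (a / S) / (q + p * (a / S)) := by
  calc a' / (S + a') = a' * q / ((S + a') * q) := (mul_div_mul_right _ _ hq).symm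
    _ = p * a / (q * S + p * a) := by rw [mul_comm p a, ← h]; ring
    _ = p * (a / S) * S / ((q + p * (a / S)) * S) := by field_simp
    _ = p * (a / S) / (q + p * (a / S)) := mul_div_mul_right _ _ hS

theorem stmt9 (n : ℕ) (t : ℝ) (ht : t ∈ Set.Ioo (0 : ℝ) 1) (ω : ℕ → ℝ)
    (hω : ∀ k ≤ n, 0 < ω k)
    (h : ℕ → ℝ)
    (hh : ∀ k ≤ n, h k = ω k * bern n k t / ∑ j ∈ range (k + 1), ω j * bern n j t) :
    h 0 = 1 ∧
      ∀ k, 1 ≤ k → k ≤ n →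
        h k = ω k * h (k - 1) * t * ((n - k + 1 : ℕ) : ℝ) /
          (ω (k - 1) * (k : ℝ) * (1 - t) +
            ω k * h (k - 1) * t * ((n - k + 1 : ℕ) : ℝ)) := by
  have hterm : ∀ k ≤ n, 0 < ω k * bern n k t := fun k hk => mul_pos (hω k hk) (bern_pos ht hk)
  refine ⟨by rw [hh 0 n.zero_le, sum_range_one, div_self (hterm 0 n.zero_le).ne'], ?_⟩
  rintro _ hk1 hk
  obtain ⟨m, rfl⟩ := Nat.exists_eq_add_of_le' hk1
  have hm : m ≤ n := by omega
  have hsum : 0 < ∑ j ∈ range (m + 1), ω j * bern n j t :=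
    sum_pos (fun j hj => hterm j (by have := mem_range.1 hj; omega)) nonempty_range_add_one
  rw [Nat.add_sub_cancel, show n - (m + 1) + 1 = n - m by omega, hh _ hk, hh _ hm,
    sum_range_succ]
  have hq : ω m * ((m + 1 : ℕ) : ℝ) * (1 - t) ≠ 0 := by
    have := hω m hm; have := sub_pos.2 ht.2; positivity
  rw [div_add_eq_of_mul_eq (a := ω m * bern n m t) (p := ω (m + 1) * t * ((n - m : ℕ) : ℝ))
    hsum.ne' hq
    (by push_cast; linear_combination ω m * ω (m + 1) * succ_mul_one_sub_mul_bern_succ n m t)]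
  ring
end

section
/- For the points Q_k generated by the new algorithm at parameter t ∈ (0,1), each Q_k lies in the convex hull of the control points {W_0, …, W_k}; in particular the computed curve point R_n(t) = Q_n lies in the convex hull of all control points. -/
/-! Each `Q k` is a convex combination of `Q (k - 1)` and `W k` with weight `h k`, so it suffices
that every `h k` lies in `[0, 1]`. This follows by induction: `h k` has the shape `a / (b + a)`
with `b > 0` (as `ω (k - 1) > 0`, `k ≥ 1`, `t < 1`) and `a ≥ 0` (as `ω k > 0`, `t > 0` and
`h (k - 1) ≥ 0`). -/

open Finset

theorem div_add_self_mem_Icc {𝕜 : Type*} [Field 𝕜] [LinearOrder 𝕜] [IsStrictOrderedRing 𝕜]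
    {a b : 𝕜} (ha : 0 ≤ a) (hb : 0 < b) : a / (b + a) ∈ Set.Icc 0 1 :=
  ⟨by positivity, div_le_one_of_le₀ (by linarith) (by positivity)⟩

theorem mem_convexHull_of_convex_recurrence {𝕜 E : Type*} [Field 𝕜] [LinearOrder 𝕜]
    [IsStrictOrderedRing 𝕜] [AddCommGroup E] [Module 𝕜 E] {n : ℕ} {h : ℕ → 𝕜} {W Q : ℕ → E}
    (hh : ∀ k, 1 ≤ k → k ≤ n → h k ∈ Set.Icc 0 1) (hQ0 : Q 0 = W 0)
    (hQ : ∀ k, 1 ≤ k → k ≤ n → Q k = (1 - h k) • Q (k - 1) + h k • W k) :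
    ∀ k ≤ n, Q k ∈ convexHull 𝕜 (W '' Set.Iic k) := by
  intro k hk
  induction k with
  | zero => exact hQ0 ▸ subset_convexHull 𝕜 _ ⟨0, Set.self_mem_Iic, rfl⟩
  | succ k ih =>
    obtain ⟨h_nonneg, h_le_one⟩ := hh (k + 1) k.succ_pos hk
    have hQ_prev : Q k ∈ convexHull 𝕜 (W '' Set.Iic (k + 1)) :=
      convexHull_mono (Set.image_mono (Set.Iic_subset_Iic.2 k.le_succ)) (ih (by omega))
    have hW_new : W (k + 1) ∈ convexHull 𝕜 (W '' Set.Iic (k + 1)) :=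
      subset_convexHull 𝕜 _ ⟨k + 1, Set.self_mem_Iic, rfl⟩
    rw [hQ (k + 1) k.succ_pos hk, Nat.add_sub_cancel]
    exact convex_convexHull 𝕜 _ hQ_prev hW_new (sub_nonneg.2 h_le_one) h_nonneg
      (sub_add_cancel 1 _)

theorem stmt12 (n d : ℕ) (t : ℝ) (ht : t ∈ Set.Ioo (0 : ℝ) 1)
    (ω : ℕ → ℝ) (W : ℕ → Fin d → ℝ) (hω : ∀ k ≤ n, 0 < ω k)
    (h : ℕ → ℝ) (Q : ℕ → Fin d → ℝ)
    (hh0 : h 0 = 1) (hQ0 : Q 0 = W 0)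
    (hh : ∀ k, 1 ≤ k → k ≤ n →
      h k = ω k * h (k - 1) * t * ((n - k + 1 : ℕ) : ℝ) /
        (ω (k - 1) * (k : ℝ) * (1 - t) +
          ω k * h (k - 1) * t * ((n - k + 1 : ℕ) : ℝ)))
    (hQ : ∀ k, 1 ≤ k → k ≤ n → Q k = (1 - h k) • Q (k - 1) + h k • W k) :
    (∀ k ≤ n, Q k ∈ convexHull ℝ (W '' Set.Iic k)) ∧
      Q n ∈ convexHull ℝ (W '' Set.Iic n) := by
  obtain ⟨ht0, ht1⟩ := ht
  have h_mem : ∀ k ≤ n, h k ∈ Set.Icc 0 1 := by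
    intro k hk
    induction k with
    | zero => simp [hh0]
    | succ k ih =>
      have h_prev := (ih (by omega)).1
      have := hω (k + 1) hk
      rw [hh (k + 1) k.succ_pos hk, Nat.add_sub_cancel]
      exact div_add_self_mem_Icc (by positivity)
        (mul_pos (mul_pos (hω k (by omega)) (by positivity)) (by linarith))
  have hull := mem_convexHull_of_convex_recurrence (fun k _ hk => h_mem k hk) hQ0 hQ
  exact ⟨hull, hull n le_rfl⟩
end

section
/- For the Bernstein basis with all equal weights, the quantities h_k satisfy the closed form h_k = B^n_k(t) / Σ_{j=0}^k B^n_j(t) for 0 ≤ k ≤ n and t ∈ (0,1). -/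
open Finset

theorem stmt13 (n : ℕ) (t : ℝ) (ht : t ∈ Set.Ioo (0 : ℝ) 1)
    (h : ℕ → ℝ) (hh0 : h 0 = 1)
    (hh : ∀ k, 1 ≤ k → k ≤ n →
      h k = h (k - 1) * t * ((n - k + 1 : ℕ) : ℝ) /
        ((k : ℝ) * (1 - t) + h (k - 1) * t * ((n - k + 1 : ℕ) : ℝ))) :
    ∀ k ≤ n, h k = bern n k t / ∑ j ∈ range (k + 1), bern n j t := by
  obtain ⟨ht0, ht1⟩ := ht
  have h1t : (0:ℝ) < 1 - t := by linarith
  have hbpos : ∀ j ≤ n, 0 < bern n j t := by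
    intro j hj
    have hc : (0:ℝ) < (n.choose j : ℝ) := by exact_mod_cast Nat.choose_pos hj
    unfold bern
    positivity
  intro k hk
  induction k with
  | zero =>
    rw [hh0, sum_range_one]
    exact (div_self (ne_of_gt (hbpos 0 (Nat.zero_le n)))).symm
  | succ m ih =>
    have hm : m ≤ n := Nat.le_of_succ_le hk
    have ihm := ih hm
    have hrec := hh (m + 1) (Nat.succ_le_succ (Nat.zero_le m)) hk
    simp only [Nat.add_sub_cancel] at hrec
    have hidx : n - (m + 1) + 1 = n - m := by omega
    rw [hidx] at hrec
    have hkey : bern n m t * t * ((n - m : ℕ) : ℝ)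
        = ((m + 1 : ℕ) : ℝ) * (1 - t) * bern n (m + 1) t := by
      unfold bern
      have h2 : (n.choose (m + 1) * (m + 1) : ℕ) = n.choose m * (n - m) :=
        Nat.choose_succ_right_eq n m
      have h2' : ((n.choose (m + 1) : ℝ)) * ((m + 1 : ℕ) : ℝ)
          = (n.choose m : ℝ) * ((n - m : ℕ) : ℝ) := by exact_mod_cast h2
      have h1 : (1 - t) ^ (n - m) = (1 - t) ^ (n - (m + 1)) * (1 - t) := by
        rw [← pow_succ]
        congr 1
        omega
      rw [h1, pow_succ]
      linear_combination (t ^ m * (1 - t) ^ (n - (m + 1)) * t * (1 - t)) * h2'.symm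
    have hSpos : 0 < ∑ j ∈ range (m + 1), bern n j t :=
      sum_pos (fun j hj => hbpos j (by simp only [mem_range] at hj; omega)) (by simp)
    set S := ∑ j ∈ range (m + 1), bern n j t with hSdef
    have hBm := hbpos m hm
    have hB := hbpos (m + 1) hk
    have hcnn : (0:ℝ) ≤ ((n - m : ℕ) : ℝ) := Nat.cast_nonneg _
    rw [ihm] at hrec
    have hXnn : 0 ≤ bern n m t / S * t * ((n - m : ℕ) : ℝ) := by positivity
    have hden : 0 < ((m + 1 : ℕ) : ℝ) * (1 - t) + bern n m t / S * t * ((n - m : ℕ) : ℝ) := by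
      have : (0:ℝ) < ((m + 1 : ℕ) : ℝ) * (1 - t) := by positivity
      linarith
    rw [sum_range_succ, ← hSdef, hrec,
      div_eq_div_iff (ne_of_gt hden) (by positivity)]
    field_simp
    push_cast [Nat.cast_sub hm] at hkey ⊢
    linear_combination S * hkey
end

section
/- Subdivision identity: fix u ∈ (0,1) and let h_j, Q_j be computed by the new algorithm with all weights 1 at parameter u for control points W_0,…,W_n. Then the left-subdivision control points V_k := Σ_{j=0}^k B^k_j(u) W_j satisfy V_k = Σ_{j=0}^k h_j^{-1} ((n−k)/(n−j)) B^k_j(u) Q_j for 0 ≤ k ≤ n−1, and V_n = Q_n. -/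
open Finset

/-!
Write `P_j = ∑_{i ≤ j} B^n_i W_i`. Then `h_j⁻¹ • Q_j = P_j / B^n_j`, and after exchanging the
order of summation the identity for `k < n` reduces to
`∑_{j=i}^{k} (n-k)/(n-j) · B^k_j/B^n_j = B^k_i/B^n_i` for `i ≤ k`.
Since `B^k_j/B^n_j = C(k,j)/C(n,j) · (1-u)^{k-n}`, this sum telescopes:
`C(k,j)/C(n,j) - C(k,j+1)/C(n,j+1) = (n-k)/(n-j) · C(k,j)/C(n,j)` and `C(k,k+1) = 0`.
The case `k = n` is the partition of unity `∑_i B^n_i = 1`.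
-/

lemma bern_pos_s17 {n i : ℕ} {u : ℝ} (hu : u ∈ Set.Ioo (0 : ℝ) 1) (hi : i ≤ n) :
    0 < bern n i u := by
  obtain ⟨hu0, hu1⟩ := hu
  have : (0 : ℝ) < n.choose i := mod_cast Nat.choose_pos hi
  have : 0 < 1 - u := sub_pos.mpr hu1
  unfold bern
  positivity

lemma sum_bern_eq_one (n : ℕ) (t : ℝ) : ∑ i ∈ range (n + 1), bern n i t = 1 := by
  have h : ∀ i, bern n i t = (bernsteinPolynomial ℝ n i).eval t := fun i => by
    simp [bern, bernsteinPolynomial]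
  simp_rw [h, ← Polynomial.eval_finsetSum, bernsteinPolynomial.sum, Polynomial.eval_one]

lemma cast_choose_succ_mul {k j : ℕ} (hjk : j ≤ k) :
    (k.choose (j + 1) : ℝ) * (j + 1) = k.choose j * (k - j) := by
  have := congrArg (Nat.cast (R := ℝ)) (Nat.choose_succ_right_eq k j)
  push_cast [Nat.cast_sub hjk] at this
  exact this

lemma choose_div_choose_sub_choose_succ_div {n k j : ℕ} (hjk : j ≤ k) (hjn : j < n) :
    (k.choose j : ℝ) / n.choose j - k.choose (j + 1) / n.choose (j + 1) =
      (n - k) / (n - j) * (k.choose j / n.choose j) := by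
  have hn : (n.choose (j + 1) : ℝ) ≠ 0 := mod_cast (Nat.choose_pos hjn).ne'
  have hn' : (n.choose j : ℝ) ≠ 0 := mod_cast (Nat.choose_pos hjn.le).ne'
  have hnj : (n : ℝ) - j ≠ 0 := sub_ne_zero.mpr (mod_cast hjn.ne')
  have hj : (j : ℝ) + 1 ≠ 0 := by positivity
  rw [div_sub_div _ _ hn' hn, div_mul_div_comm,
    div_eq_div_iff (mul_ne_zero hn' hn) (mul_ne_zero hnj hn')]
  refine mul_right_cancel₀ hj ?_
  linear_combination (k.choose j * n.choose j * (k - j) : ℝ) * cast_choose_succ_mul hjn.le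
    - (n.choose j ^ 2 * (n - j) : ℝ) * cast_choose_succ_mul hjk

lemma sum_Ico_choose_div_choose {n k i : ℕ} (hik : i ≤ k) (hkn : k < n) :
    ∑ j ∈ Ico i (k + 1), (n - k : ℝ) / (n - j) * (k.choose j / n.choose j) =
      (k.choose i : ℝ) / n.choose i := by
  have hstep : ∀ j ∈ Ico i (k + 1), (n - k : ℝ) / (n - j) * (k.choose j / n.choose j) =
      -((k.choose (j + 1) : ℝ) / n.choose (j + 1) - k.choose j / n.choose j) := fun j hj => by
    rw [neg_sub, choose_div_choose_sub_choose_succ_div] <;> grind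
  rw [sum_congr rfl hstep, sum_neg_distrib,
    sum_Ico_sub (fun j => (k.choose j : ℝ) / n.choose j) (by omega : i ≤ k + 1),
    Nat.choose_succ_self, Nat.cast_zero, zero_div, zero_sub, neg_neg]

lemma bern_div_bern {n k j : ℕ} {u : ℝ} (hu : u ∈ Set.Ioo (0 : ℝ) 1) (hjk : j ≤ k)
    (hkn : k ≤ n) :
    bern k j u / bern n j u = (k.choose j : ℝ) / n.choose j / (1 - u) ^ (n - k) := by
  have hn : (n.choose j : ℝ) ≠ 0 := mod_cast (Nat.choose_pos (hjk.trans hkn)).ne'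
  have hu0 : u ≠ 0 := hu.1.ne'
  have hu1 : 1 - u ≠ 0 := (sub_pos.mpr hu.2).ne'
  have hpow : (1 - u) ^ (n - j) = (1 - u) ^ (k - j) * (1 - u) ^ (n - k) := by
    rw [← pow_add]; congr 1; omega
  rw [bern, bern, hpow]
  field_simp

lemma sum_Ico_mul_bern_div_bern {n k i : ℕ} {u : ℝ} (hu : u ∈ Set.Ioo (0 : ℝ) 1) (hik : i ≤ k)
    (hkn : k < n) :
    ∑ j ∈ Ico i (k + 1), (n - k : ℝ) / (n - j) * (bern k j u / bern n j u) =
      bern k i u / bern n i u := by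
  calc ∑ j ∈ Ico i (k + 1), (n - k : ℝ) / (n - j) * (bern k j u / bern n j u)
      = (∑ j ∈ Ico i (k + 1), (n - k : ℝ) / (n - j) * (k.choose j / n.choose j)) /
          (1 - u) ^ (n - k) := by
        rw [sum_div]
        refine sum_congr rfl fun j hj => ?_
        rw [bern_div_bern hu (by grind) hkn.le, mul_div_assoc]
    _ = bern k i u / bern n i u := by
        rw [sum_Ico_choose_div_choose hik hkn, bern_div_bern hu hik hkn.le]

lemma sum_bern_smul_eq_sum_smul_sum_bern_smul {E : Type*} [AddCommMonoid E] [Module ℝ E]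
    {n k : ℕ} {u : ℝ} (hu : u ∈ Set.Ioo (0 : ℝ) 1) (hkn : k < n) (W : ℕ → E) :
    ∑ j ∈ range (k + 1), bern k j u • W j =
      ∑ j ∈ range (k + 1), ((n - k : ℝ) / (n - j) * (bern k j u / bern n j u)) •
        ∑ i ∈ range (j + 1), bern n i u • W i := by
  set c : ℕ → ℝ := fun j => (n - k : ℝ) / (n - j) * (bern k j u / bern n j u)
  symm
  calc ∑ j ∈ range (k + 1), c j • ∑ i ∈ range (j + 1), bern n i u • W i
      = ∑ j ∈ Ico 0 (k + 1), ∑ i ∈ Ico 0 (j + 1), (c j * bern n i u) • W i := by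
        simp_rw [smul_sum, smul_smul, range_eq_Ico]
    _ = ∑ i ∈ Ico 0 (k + 1), ∑ j ∈ Ico i (k + 1), (c j * bern n i u) • W i :=
        (sum_Ico_Ico_comm 0 (k + 1) fun i j => (c j * bern n i u) • W i).symm
    _ = ∑ i ∈ range (k + 1), bern k i u • W i := by
        rw [range_eq_Ico]
        refine sum_congr rfl fun i hi => ?_
        have hik : i ≤ k := Nat.lt_succ_iff.mp (mem_Ico.mp hi).2
        rw [← sum_smul, ← sum_mul, sum_Ico_mul_bern_div_bern hu hik hkn,
          div_mul_cancel₀ _ (bern_pos_s17 hu (hik.trans hkn.le)).ne']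

theorem stmt17 (n d : ℕ) (u : ℝ) (hu : u ∈ Set.Ioo (0 : ℝ) 1)
    (W : ℕ → Fin d → ℝ)
    (h : ℕ → ℝ) (Q V : ℕ → Fin d → ℝ)
    (hh : ∀ j ≤ n, h j = bern n j u / ∑ i ∈ range (j + 1), bern n i u)
    (hQ : ∀ j ≤ n, Q j = (∑ i ∈ range (j + 1), bern n i u)⁻¹ •
        ∑ i ∈ range (j + 1), bern n i u • W i)
    (hV : ∀ k ≤ n, V k = ∑ j ∈ range (k + 1), bern k j u • W j) :
    (∀ k < n, V k = ∑ j ∈ range (k + 1),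
        ((h j)⁻¹ * (((n - k : ℕ) : ℝ) / ((n - j : ℕ) : ℝ)) * bern k j u) • Q j) ∧
      V n = Q n := by
  refine ⟨fun k hk => ?_, ?_⟩
  · rw [hV k hk.le, sum_bern_smul_eq_sum_smul_sum_bern_smul hu hk]
    refine sum_congr rfl fun j hj => ?_
    have hjn : j ≤ n := by grind
    have hS : ∑ i ∈ range (j + 1), bern n i u ≠ 0 :=
      (sum_pos (fun i hi => bern_pos_s17 hu (by grind)) nonempty_range_add_one).ne'
    have hB : bern n j u ≠ 0 := (bern_pos_s17 hu hjn).ne'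
    rw [hh j hjn, hQ j hjn, smul_smul, Nat.cast_sub hk.le, Nat.cast_sub hjn]
    congr 1
    field_simp
  · rw [hV n le_rfl, hQ n le_rfl, sum_bern_eq_one, inv_one, one_smul]
end
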